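/- Let ρ_W = (1/3)|00⟩⟨00| + (2/3)|ψ⁺⟩⟨ψ⁺| with |ψ⁺⟩ = (|01⟩ + |10⟩)/√2, the two-qubit reduced state of the W state |W⟩ = (|100⟩ + |010⟩ + |001⟩)/√3. Then max over pure product states |a⟩⊗|b⟩ of ⟨a|⟨b| ρ_W |a⟩|b⟩ equals 4/9. -/

import Mathlib

open Real

noncomputable def ket00 : EuclideanSpace ℂ (Fin 2 × Fin 2) :=
  WithLp.toLp 2 (fun p : Fin 2 × Fin 2 => if p = (0, 0) then 1 else 0)

noncomputable def psiPlus : EuclideanSpace ℂ (Fin 2 × Fin 2) :=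
  WithLp.toLp 2 (fun p : Fin 2 × Fin 2 => if p = (0, 1) ∨ p = (1, 0) then ((Real.sqrt 2)⁻¹ : ℂ) else 0)

noncomputable def prodVec2 (a b : EuclideanSpace ℂ (Fin 2)) :
    EuclideanSpace ℂ (Fin 2 × Fin 2) :=
  WithLp.toLp 2 (fun p : Fin 2 × Fin 2 => a p.1 * b p.2)

/-- ⟨a⊗b| ρ_W |a⊗b⟩ where ρ_W = (1/3)|00⟩⟨00| + (2/3)|ψ⁺⟩⟨ψ⁺| is the
two-qubit reduced state of the W state. -/
noncomputable def rhoWExp (a b : EuclideanSpace ℂ (Fin 2)) : ℝ :=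
  (1/3) * ‖(inner ℂ (prodVec2 a b) ket00 : ℂ)‖^2
    + (2/3) * ‖(inner ℂ (prodVec2 a b) psiPlus : ℂ)‖^2

/-!
Write `x = |a₀|, y = |a₁|, u = |b₀|, v = |b₁|`. Since `√2⁻¹` normalises `|ψ⁺⟩`, the expectation is
`(|a₀b₀|² + |a₀b₁ + a₁b₀|²) / 3 ≤ ((xu)² + (xv + yu)²) / 3`. Put `c = xu − yv`; then
`(xv + yu)² + c² = (x² + y²)(u² + v²) = 1` and, by Cauchy–Schwarz, `xu ≤ (1 + c) / 2`, so
`(xu)² + (xv + yu)² ≤ (1 + c)² / 4 + 1 − c² = 4/3 − 3(c − 1/3)² / 4 ≤ 4/3`.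
Equality needs `c = 1/3` and `xu + yv = 1`, i.e. `a = b = (√(2/3), √(1/3))`.
-/

lemma norm_sq_apply_zero_add_norm_sq_apply_one {𝕜 : Type*} [RCLike 𝕜]
    (a : EuclideanSpace 𝕜 (Fin 2)) :
    ‖a 0‖ ^ 2 + ‖a 1‖ ^ 2 = ‖a‖ ^ 2 := by
  rw [EuclideanSpace.norm_sq_eq, Fin.sum_univ_two]

lemma inner_prodVec2_ket00 (a b : EuclideanSpace ℂ (Fin 2)) :
    inner ℂ (prodVec2 a b) ket00 = starRingEnd ℂ (a 0 * b 0) := by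
  simp [PiLp.inner_apply, Fintype.sum_prod_type, Fin.sum_univ_two, ket00, prodVec2, Prod.ext_iff]

lemma inner_prodVec2_psiPlus (a b : EuclideanSpace ℂ (Fin 2)) :
    inner ℂ (prodVec2 a b) psiPlus
      = starRingEnd ℂ (a 0 * b 1 + a 1 * b 0) * ((√2)⁻¹ : ℝ) := by
  simp [PiLp.inner_apply, Fintype.sum_prod_type, Fin.sum_univ_two, psiPlus, prodVec2,
    Prod.ext_iff]
  ring

lemma rhoWExp_eq (a b : EuclideanSpace ℂ (Fin 2)) :
    rhoWExp a b = (‖a 0 * b 0‖ ^ 2 + ‖a 0 * b 1 + a 1 * b 0‖ ^ 2) / 3 := by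
  have hsqrt : ((√2)⁻¹ : ℝ) ^ 2 = 1 / 2 := by
    rw [inv_pow, Real.sq_sqrt zero_le_two, one_div]
  rw [rhoWExp, inner_prodVec2_ket00, inner_prodVec2_psiPlus, norm_mul, RCLike.norm_conj,
    RCLike.norm_conj, Complex.norm_real, Real.norm_eq_abs, mul_pow, sq_abs, hsqrt]
  ring

lemma sq_mul_add_sq_mul_add_mul_le_four_thirds {x y u v : ℝ} (hx : 0 ≤ x) (hu : 0 ≤ u)
    (hxy : x ^ 2 + y ^ 2 = 1) (huv : u ^ 2 + v ^ 2 = 1) :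
    (x * u) ^ 2 + (x * v + y * u) ^ 2 ≤ 4 / 3 := by
  set c := x * u - y * v
  have hsc : (x * v + y * u) ^ 2 + c ^ 2 = 1 := by
    linear_combination (x ^ 2 + y ^ 2) * huv + hxy
  have hcauchy : x * u + y * v ≤ 1 := by
    nlinarith [sq_nonneg (x - u), sq_nonneg (y - v)]
  have hxu : (x * u) ^ 2 ≤ ((1 + c) / 2) ^ 2 :=
    pow_le_pow_left₀ (mul_nonneg hx hu) (by linarith) 2
  nlinarith [sq_nonneg (c - 1 / 3)]

lemma rhoWExp_le (a b : EuclideanSpace ℂ (Fin 2)) (ha : ‖a‖ = 1) (hb : ‖b‖ = 1) :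
    rhoWExp a b ≤ 4 / 9 := by
  have hna := norm_sq_apply_zero_add_norm_sq_apply_one a
  have hnb := norm_sq_apply_zero_add_norm_sq_apply_one b
  rw [ha, one_pow] at hna
  rw [hb, one_pow] at hnb
  have htri : ‖a 0 * b 1 + a 1 * b 0‖ ≤ ‖a 0‖ * ‖b 1‖ + ‖a 1‖ * ‖b 0‖ := by
    simpa only [norm_mul] using norm_add_le (a 0 * b 1) (a 1 * b 0)
  have hbound := sq_mul_add_sq_mul_add_mul_le_four_thirds (norm_nonneg (a 0)) (norm_nonneg (b 0))
    hna hnb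
  rw [rhoWExp_eq, norm_mul]
  nlinarith [pow_le_pow_left₀ (norm_nonneg _) htri 2]

noncomputable def wMaximizer : EuclideanSpace ℂ (Fin 2) :=
  WithLp.toLp 2 ![(√(2 / 3) : ℝ), (√(1 / 3) : ℝ)]

lemma norm_wMaximizer : ‖wMaximizer‖ = 1 := by
  rw [EuclideanSpace.norm_eq, Real.sqrt_eq_one, Fin.sum_univ_two]
  change ‖((√(2 / 3) : ℝ) : ℂ)‖ ^ 2 + ‖((√(1 / 3) : ℝ) : ℂ)‖ ^ 2 = 1
  simp only [Complex.norm_real, Real.norm_eq_abs, sq_abs]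
  rw [Real.sq_sqrt (by norm_num), Real.sq_sqrt (by norm_num)]
  norm_num

lemma rhoWExp_wMaximizer : rhoWExp wMaximizer wMaximizer = 4 / 9 := by
  have h0 : wMaximizer 0 = (√(2 / 3) : ℝ) := rfl
  have h1 : wMaximizer 1 = (√(1 / 3) : ℝ) := rfl
  have hs : √(2 / 3) ^ 2 = 2 / 3 := Real.sq_sqrt (by norm_num)
  have ht : √(1 / 3) ^ 2 = 1 / 3 := Real.sq_sqrt (by norm_num)
  rw [rhoWExp_eq, h0, h1, ← Complex.ofReal_mul, ← Complex.ofReal_mul, ← Complex.ofReal_mul,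
    ← Complex.ofReal_add, Complex.norm_real, Complex.norm_real, Real.norm_eq_abs,
    Real.norm_eq_abs, sq_abs, sq_abs]
  linear_combination ((√(2 / 3) ^ 2 + 2 / 3) / 3 + 4 / 3 * √(1 / 3) ^ 2) * hs + 8 / 9 * ht

theorem stmt13 :
    IsGreatest {x : ℝ | ∃ a b : EuclideanSpace ℂ (Fin 2),
      ‖a‖ = 1 ∧ ‖b‖ = 1 ∧ x = rhoWExp a b} (4/9) := by
  refine ⟨⟨wMaximizer, wMaximizer, norm_wMaximizer, norm_wMaximizer,
    rhoWExp_wMaximizer.symm⟩, ?_⟩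
  rintro x ⟨a, b, ha, hb, rfl⟩
  exact rhoWExp_le a b ha hb
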